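/- Let S(m,n) = (1/(√(2π)·m!)) ∫₀^∞ He_m(x) He_n(x) e^{−x²/2} dx and K(m,n) = (2π)^{−1/2} He_{m−1}(0) He_n(0) / m!. For all m ≥ 1 and n ≥ 1, S(m,n) = K(m,n) + (n/m)·S(m−1, n−1). -/

import Mathlib

open MeasureTheory Real

/-- Probabilists' Hermite polynomial `He n x`, with the convention `He n ≡ 0` for `n < 0`. -/
noncomputable def He (n : ℤ) (x : ℝ) : ℝ :=
  if n < 0 then 0 else Polynomial.aeval x (Polynomial.hermite n.toNat)

/-- `S m n = (1/(√(2π)·m!)) ∫₀^∞ He_m(x) He_n(x) e^{−x²/2} dx`. -/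
noncomputable def S (m n : ℕ) : ℝ :=
  (1 / (Real.sqrt (2 * Real.pi) * (Nat.factorial m))) *
    ∫ x in Set.Ioi (0 : ℝ), He m x * He n x * Real.exp (-x ^ 2 / 2)

/-- `K(m,n) = (2π)^{−1/2} He_{m−1}(0) He_n(0) / m!`. -/
noncomputable def K (m n : ℕ) : ℝ :=
  (2 * Real.pi) ^ (-(1 / 2 : ℝ)) / (Nat.factorial m) * He ((m : ℤ) - 1) 0 * He n 0

/-!
Since `He (n + 1) = x He n - He n'`, the function `He (m + 1) e^{-x²/2}` is the derivative of
`-He m e^{-x²/2}`. Integrating by parts over `(0, ∞)`, the boundary term at `0` is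
`He m (0) He n (0)` and the remaining integral involves `He n' = n He (n - 1)`.
-/

open Polynomial Filter

namespace Polynomial

/-- For `n = 0` both sides vanish, whatever the truncated `n - 1` is. -/
theorem derivative_hermite (n : ℕ) : derivative (hermite n) = n * hermite (n - 1) := by
  induction n with
  | zero => simp
  | succ n ih =>
    rw [hermite_succ, derivative_sub, derivative_mul, derivative_X, one_mul, ih,
      derivative_mul, derivative_natCast, zero_mul, zero_add]
    rcases n with _ | n
    · simp
    · simp only [Nat.add_sub_cancel, hermite_succ n]
      push_cast
      ring

variable {R : Type*} [CommRing R] [Algebra R ℝ]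

theorem integrable_aeval_mul_exp_neg_sq_div_two (p : R[X]) :
    Integrable fun x : ℝ => aeval x p * exp (-x ^ 2 / 2) := by
  induction p using Polynomial.induction_on' with
  | monomial n c =>
    have h : Integrable fun x : ℝ => x ^ (n : ℝ) * exp (-(1 / 2) * x ^ 2) :=
      integrable_rpow_mul_exp_neg_mul_sq (by norm_num) (by linarith [n.cast_nonneg (α := ℝ)])
    refine (h.const_mul (algebraMap R ℝ c)).congr (Eventually.of_forall fun x => ?_)
    simp only [aeval_monomial, rpow_natCast]
    ring_nf
  | add p q hp hq =>
    exact (hp.add hq).congr (Eventually.of_forall fun x => by simp [add_mul])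

theorem tendsto_aeval_mul_exp_neg_sq_div_two_atTop (p : R[X]) :
    Tendsto (fun x : ℝ => aeval x p * exp (-x ^ 2 / 2)) atTop (nhds 0) := by
  have hexp : Tendsto (fun x : ℝ => exp (x - x ^ 2 / 2)) atTop (nhds 0) := by
    refine tendsto_exp_atBot.comp (tendsto_atBot_mono' _ ?_ tendsto_neg_atTop_atBot)
    filter_upwards [eventually_ge_atTop (4 : ℝ)] with x hx
    nlinarith
  have h := (tendsto_div_exp_atTop (p.map (algebraMap R ℝ))).mul hexp
  rw [mul_zero] at h
  refine h.congr fun x => ?_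
  rw [eval_map_algebraMap, div_mul_eq_mul_div, mul_div_assoc, ← exp_sub]
  ring_nf

theorem hasDerivAt_neg_aeval_mul_aeval_mul_exp (p q : R[X]) (x : ℝ) :
    HasDerivAt (fun x => -(aeval x p * aeval x q * exp (-x ^ 2 / 2)))
      (aeval x (X * p - derivative p) * aeval x q * exp (-x ^ 2 / 2)
        - aeval x p * aeval x (derivative q) * exp (-x ^ 2 / 2)) x := by
  have hgauss : HasDerivAt (fun x : ℝ => exp (-x ^ 2 / 2)) (exp (-x ^ 2 / 2) * -x) x :=
    (((hasDerivAt_pow 2 x).neg.div_const 2).congr_deriv (by push_cast; ring)).exp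
  refine (((p.hasDerivAt_aeval x).mul (q.hasDerivAt_aeval x)).mul hgauss).neg.congr_deriv ?_
  simp only [map_sub, map_mul, aeval_X, Pi.mul_apply]
  ring

theorem integral_Ioi_aeval_mul_aeval_mul_exp (p q : R[X]) :
    ∫ x in Set.Ioi 0, aeval x (X * p - derivative p) * aeval x q * exp (-x ^ 2 / 2)
      = aeval 0 p * aeval 0 q
        + ∫ x in Set.Ioi 0, aeval x p * aeval x (derivative q) * exp (-x ^ 2 / 2) := by
  have hint : ∀ r s : R[X],
      IntegrableOn (fun x => aeval x r * aeval x s * exp (-x ^ 2 / 2)) (Set.Ioi 0) := fun r s =>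
    (integrable_aeval_mul_exp_neg_sq_div_two (r * s)).integrableOn.congr_fun
      (fun x _ => by simp only [map_mul]) measurableSet_Ioi
  have hlim : Tendsto (fun x => -(aeval x p * aeval x q * exp (-x ^ 2 / 2))) atTop (nhds 0) := by
    simpa [map_mul] using (tendsto_aeval_mul_exp_neg_sq_div_two_atTop (p * q)).neg
  have hparts := integral_Ioi_of_hasDerivAt_of_tendsto' (a := 0)
    (fun x _ => hasDerivAt_neg_aeval_mul_aeval_mul_exp p q x) ((hint _ _).sub (hint _ _)) hlim
  rw [integral_sub (hint _ _) (hint _ _)] at hparts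
  simp only [ne_eq, OfNat.ofNat_ne_zero, not_false_eq_true, zero_pow, neg_zero, zero_div, exp_zero,
    mul_one, sub_neg_eq_add, zero_add] at hparts
  linarith

end Polynomial

theorem integral_Ioi_hermite_succ_mul_hermite (m n : ℕ) :
    ∫ x in Set.Ioi 0, aeval x (hermite (m + 1)) * aeval x (hermite n) * exp (-x ^ 2 / 2)
      = aeval 0 (hermite m) * aeval 0 (hermite n) + n *
        ∫ x in Set.Ioi 0, aeval x (hermite m) * aeval x (hermite (n - 1)) * exp (-x ^ 2 / 2) := by
  rw [hermite_succ, integral_Ioi_aeval_mul_aeval_mul_exp, derivative_hermite,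
    ← integral_const_mul]
  congr 2 with x
  simp only [map_mul, map_natCast]
  ring

theorem He_natCast (n : ℕ) (x : ℝ) : He n x = aeval x (hermite n) := by
  simp [He]

theorem S_recursion_general (m n : ℕ) (hm : 1 ≤ m) :
    S m n = K m n + ((n : ℝ) / m) * S (m - 1) (n - 1) := by
  obtain ⟨m, rfl⟩ := Nat.exists_eq_add_of_le' hm
  have hK : K (m + 1) n
      = (sqrt (2 * π))⁻¹ / (m + 1).factorial * aeval 0 (hermite m) * aeval 0 (hermite n) := by
    rw [K, rpow_neg (by positivity), ← sqrt_eq_rpow, Nat.cast_add_one, add_sub_cancel_right,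
      He_natCast, He_natCast]
  simp only [S, He_natCast, Nat.add_sub_cancel]
  rw [integral_Ioi_hermite_succ_mul_hermite, hK, Nat.factorial_succ]
  push_cast
  field_simp

/-- For all `m ≥ 1` and `n ≥ 1`, `S(m,n) = K(m,n) + (n/m)·S(m−1, n−1)`. -/
theorem S_recursion (m n : ℕ) (hm : 1 ≤ m) (hn : 1 ≤ n) :
    S m n = K m n + ((n : ℝ) / m) * S (m - 1) (n - 1) :=
  S_recursion_general m n hm
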